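/- For the square lattice mass-spring model with nearest and next-to-nearest neighbor harmonic springs, at the equilibrium dilation r* = (K₁a₁ + √2 K₂a₂)/(K₁+2K₂): the continuum constant λ̃_LH(r*Id) = (K₁/12)β·min{1, 2ακ} is always strictly positive, whereas λ_atom(r*Id) > 0 if and only if β < 2, equivalently iff α ≥ 1/2, or α < 1/2 and κ < 1/(2(1−2α)). -/

import Mathlib

open Real

noncomputable section

/-- `𝓡 = {±e₁, ±e₂, e₁±e₂, −e₁±e₂}` for the square lattice with nearest and
next-to-nearest neighbours. -/
def sqR : Finset (Fin 2 → ℤ) :=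
  {![1, 0], ![-1, 0], ![0, 1], ![0, -1], ![1, 1], ![1, -1], ![-1, 1], ![-1, -1]}

/-- The Hessian `K = D²W_atom((r*ρ)_ρ)` of the mass-spring energy at the
equilibrium dilation `r* Id`:
`K_{jρlσ} = δ_{ρσ}δ_{|ρ|1}[δ_{jl}(K₁/2)(1−a₁/r*) + ρ_jρ_l K₁a₁/(2r*)]
  + δ_{ρσ}δ_{|ρ|√2}[δ_{jl}(K₂/2)(1−a₂/(√2 r*)) + ρ_jρ_l K₂a₂/(4√2 r*)]`. -/
def sqK (K₁ K₂ a₁ a₂ rs : ℝ) : Fin 2 → ↥sqR → Fin 2 → ↥sqR → ℝ :=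
  fun j ρ l σ =>
    if ρ = σ then
      (if ρ.1 0 * ρ.1 0 + ρ.1 1 * ρ.1 1 = 1 then
        (if j = l then 1 else 0) * (K₁ / 2) * (1 - a₁ / rs) +
          (ρ.1 j : ℝ) * (ρ.1 l : ℝ) * (K₁ * a₁ / (2 * rs))
      else
        (if j = l then 1 else 0) * (K₂ / 2) * (1 - a₂ / (Real.sqrt 2 * rs)) +
          (ρ.1 j : ℝ) * (ρ.1 l : ℝ) * (K₂ * a₂ / (4 * Real.sqrt 2 * rs)))
    else 0

/-- `ρ·k`. -/
def ipk (ρ : Fin 2 → ℤ) (k : Fin 2 → ℝ) : ℝ :=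
  ∑ i, (ρ i : ℝ) * k i

/-- `K[ξ⊗v, ξ⊗v]`. -/
def Qform (K : Fin 2 → ↥sqR → Fin 2 → ↥sqR → ℝ) (ξ : Fin 2 → ℝ)
    (v : ↥sqR → ℝ) : ℝ :=
  ∑ j, ∑ l, ∑ ρ : ↥sqR, ∑ σ : ↥sqR, K j ρ l σ * (ξ j * v ρ) * (ξ l * v σ)

/-- The atomistic stability constant (cosine/sine representation). -/
def lamAtomCS (K : Fin 2 → ↥sqR → Fin 2 → ↥sqR → ℝ) : ℝ :=
  sInf { r : ℝ | ∃ (ξ k : Fin 2 → ℝ), ξ ≠ 0 ∧ k ≠ 0 ∧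
    (∀ i, k i ∈ Set.Ico 0 (2 * π)) ∧
    r = (Qform K ξ (fun ρ => Real.cos (ipk ρ.1 k) - 1) +
          Qform K ξ (fun ρ => Real.sin (ipk ρ.1 k))) /
        ((∑ i, (ξ i) ^ 2) *
          ((∑ ρ : ↥sqR, (Real.cos (ipk ρ.1 k) - 1) ^ 2) +
            (∑ ρ : ↥sqR, (Real.sin (ipk ρ.1 k)) ^ 2))) }

/-- The modified Legendre–Hadamard constant `λ̃_LH`. -/
def lamTildeLH (K : Fin 2 → ↥sqR → Fin 2 → ↥sqR → ℝ) : ℝ :=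
  sInf { r : ℝ | ∃ ξ η : Fin 2 → ℝ, ξ ≠ 0 ∧ η ≠ 0 ∧
    r = Qform K ξ (fun ρ => ipk ρ.1 η) /
        ((∑ i, (ξ i) ^ 2) * (∑ ρ : ↥sqR, (ipk ρ.1 η) ^ 2)) }

/-! At the equilibrium dilation `r*` the Hessian is diagonal in the bonds, with block
`c δ_{jl} + d ρ_j ρ_l` on a bond `ρ` (`(c₁, d₁)` for nearest, `(c₂, d₂)` for next-to-nearest
neighbours), and equilibrium means `c₁ + 2 c₂ = 0`. Both quotients then only see four bond
weights. In `λ̃_LH` the isotropic parts cancel, and the quotient has minimum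
`min (d₁/6) (2d₂/3)`, which is `(K₁/12) β min{1, 2ακ}` because `β = a₁/r*`.
In `λ_atom` the wave vector `k = (π, π)` gives the value `c₁ + d₁/2 = (K₁/4)(2 - β)`, so
`λ_atom > 0` forces `β < 2`. Conversely, for `ε = min (c₁ + d₁/2) (d₁/6) (2d₂/3) > 0` the
numerator minus `ε` times the denominator is a positive semidefinite quadratic form in `ξ`;
its discriminant is controlled by `|sin k₁ sin k₂| ≤ 1 - cos k₁ cos k₂`. -/

lemma sum_sq_pos_of_ne_zero {ι : Type*} [Fintype ι] {ξ : ι → ℝ} (h : ξ ≠ 0) :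
    0 < ∑ i, ξ i ^ 2 := by
  obtain ⟨i, hi⟩ := Function.ne_iff.mp h
  exact Finset.sum_pos' (fun j _ => sq_nonneg (ξ j)) ⟨i, Finset.mem_univ i, sq_pos_of_ne_zero hi⟩

lemma sInf_pos_iff_of_mem {S : Set ℝ} {a : ℝ} (ha : a ∈ S)
    (hlow : 0 < a → ∃ ε > 0, ∀ b ∈ S, ε ≤ b) : 0 < sInf S ↔ 0 < a := by
  refine ⟨fun hS => ?_, fun hpos => ?_⟩
  · by_contra! h
    exact (Real.sInf_nonpos' ⟨a, ha, h⟩).not_gt hS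
  · obtain ⟨ε, hε, hεS⟩ := hlow hpos
    exact hε.trans_le (le_csInf ⟨a, ha⟩ hεS)

lemma quadratic_nonneg_of_sq_le {a b c : ℝ} (ha : 0 ≤ a) (hc : 0 ≤ c) (hb : b ^ 2 ≤ a * c)
    (X Y : ℝ) : 0 ≤ a * X ^ 2 + 2 * b * (X * Y) + c * Y ^ 2 := by
  rcases ha.eq_or_lt with rfl | ha
  · obtain rfl : b = 0 := by nlinarith [sq_nonneg b]
    simpa using mul_nonneg hc (sq_nonneg Y)
  · nlinarith [sq_nonneg (a * X + b * Y), mul_nonneg (sub_nonneg.2 hb) (sq_nonneg Y)]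

lemma one_add_two_mul_div_lt_two_iff {α κ : ℝ} (hα : 0 ≤ α) (hκ : 0 ≤ κ) :
    (1 + 2 * κ) / (1 + 2 * α * κ) < 2 ↔
      1 / 2 ≤ α ∨ (α < 1 / 2 ∧ κ < 1 / (2 * (1 - 2 * α))) := by
  rw [div_lt_iff₀ (by nlinarith [mul_nonneg hα hκ])]
  rcases le_or_gt (1 / 2) α with h | h
  · simp only [h, true_or, iff_true]
    nlinarith [mul_nonneg hκ (by linarith : (0 : ℝ) ≤ 2 * α - 1)]
  · simp only [not_le.2 h, h, true_and, false_or]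
    rw [lt_div_iff₀ (by linarith)]
    constructor <;> intro <;> nlinarith

def bondK (c₁ c₂ d₁ d₂ : ℝ) : Fin 2 → ↥sqR → Fin 2 → ↥sqR → ℝ :=
  fun j ρ l σ =>
    if ρ = σ then
      (if ρ.1 0 * ρ.1 0 + ρ.1 1 * ρ.1 1 = 1 then
        (if j = l then c₁ else 0) + (ρ.1 j : ℝ) * (ρ.1 l : ℝ) * d₁
      else
        (if j = l then c₂ else 0) + (ρ.1 j : ℝ) * (ρ.1 l : ℝ) * d₂)
    else 0

lemma sqK_eq_bondK (K₁ K₂ a₁ a₂ rs : ℝ) :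
    sqK K₁ K₂ a₁ a₂ rs = bondK (K₁ / 2 * (1 - a₁ / rs)) (K₂ / 2 * (1 - a₂ / (√2 * rs)))
      (K₁ * a₁ / (2 * rs)) (K₂ * a₂ / (4 * √2 * rs)) := by
  ext j ρ l σ
  simp only [sqK, bondK]
  split_ifs <;> ring

/-- `K[ξ⊗v, ξ⊗v]` for `K = bondK c₁ c₂ d₁ d₂` and `ξ = (X, Y)`, where `u₁, …, u₄` is the
weight `v_ρ² + v_{-ρ}²` of the bond pair `ρ = e₁, e₂, e₁ + e₂, e₁ - e₂`. -/
def bondForm (c₁ c₂ d₁ d₂ X Y u₁ u₂ u₃ u₄ : ℝ) : ℝ :=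
  u₁ * (c₁ * (X ^ 2 + Y ^ 2) + d₁ * X ^ 2) + u₂ * (c₁ * (X ^ 2 + Y ^ 2) + d₁ * Y ^ 2) +
    u₃ * (c₂ * (X ^ 2 + Y ^ 2) + d₂ * (X + Y) ^ 2) +
    u₄ * (c₂ * (X ^ 2 + Y ^ 2) + d₂ * (X - Y) ^ 2)

lemma sum_sqR (f : ↥sqR → ℝ) : ∑ ρ, f ρ =
    f ⟨![1, 0], by decide⟩ + f ⟨![-1, 0], by decide⟩ + f ⟨![0, 1], by decide⟩ +
      f ⟨![0, -1], by decide⟩ + f ⟨![1, 1], by decide⟩ + f ⟨![1, -1], by decide⟩ +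
      f ⟨![-1, 1], by decide⟩ + f ⟨![-1, -1], by decide⟩ := by
  have h := Finset.sum_coe_sort sqR (fun v => if h : v ∈ sqR then f ⟨v, h⟩ else 0)
  simp only [Finset.coe_mem, dite_true] at h
  rw [h]
  simp [sqR, Finset.sum_insert]
  ring

@[simp] lemma ipk_cons (a b : ℤ) (k : Fin 2 → ℝ) : ipk ![a, b] k = a * k 0 + b * k 1 := by
  simp [ipk, Fin.sum_univ_two]

lemma Qform_bondK (c₁ c₂ d₁ d₂ : ℝ) (ξ : Fin 2 → ℝ) (w : (Fin 2 → ℤ) → ℝ) :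
    Qform (bondK c₁ c₂ d₁ d₂) ξ (fun ρ => w ρ) =
      bondForm c₁ c₂ d₁ d₂ (ξ 0) (ξ 1) (w ![1, 0] ^ 2 + w ![-1, 0] ^ 2)
        (w ![0, 1] ^ 2 + w ![0, -1] ^ 2) (w ![1, 1] ^ 2 + w ![-1, -1] ^ 2)
        (w ![1, -1] ^ 2 + w ![-1, 1] ^ 2) := by
  simp only [Qform, bondK, ite_mul, zero_mul, Finset.sum_ite_eq, Finset.mem_univ, if_true,
    Fin.sum_univ_two, sum_sqR]
  norm_num [bondForm]
  ring

lemma Qform_bondK_ipk (c₁ c₂ d₁ d₂ : ℝ) (ξ η : Fin 2 → ℝ) :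
    Qform (bondK c₁ c₂ d₁ d₂) ξ (fun ρ => ipk ρ.1 η) =
      bondForm c₁ c₂ d₁ d₂ (ξ 0) (ξ 1) (2 * η 0 ^ 2) (2 * η 1 ^ 2) (2 * (η 0 + η 1) ^ 2)
        (2 * (η 0 - η 1) ^ 2) := by
  rw [Qform_bondK c₁ c₂ d₁ d₂ ξ (fun v => ipk v η)]
  congr 1 <;> simp <;> ring

lemma sum_sqR_ipk_sq (η : Fin 2 → ℝ) :
    ∑ ρ : ↥sqR, ipk ρ.1 η ^ 2 = 6 * (η 0 ^ 2 + η 1 ^ 2) := by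
  rw [sum_sqR]
  simp
  ring

lemma Qform_bondK_cos_add_sin (c₁ c₂ d₁ d₂ : ℝ) (ξ k : Fin 2 → ℝ) :
    Qform (bondK c₁ c₂ d₁ d₂) ξ (fun ρ => cos (ipk ρ.1 k) - 1) +
        Qform (bondK c₁ c₂ d₁ d₂) ξ (fun ρ => sin (ipk ρ.1 k)) =
      4 * bondForm c₁ c₂ d₁ d₂ (ξ 0) (ξ 1) (1 - cos (k 0)) (1 - cos (k 1))
        (1 - cos (k 0 + k 1)) (1 - cos (k 0 - k 1)) := by
  rw [Qform_bondK c₁ c₂ d₁ d₂ ξ (fun v => cos (ipk v k) - 1),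
    Qform_bondK c₁ c₂ d₁ d₂ ξ (fun v => sin (ipk v k))]
  have h₁ : cos (-k 0 - k 1) = cos (k 0 + k 1) := by rw [← cos_neg]; ring_nf
  have h₂ : cos (-k 0 + k 1) = cos (k 0 - k 1) := by rw [← cos_neg]; ring_nf
  simp [bondForm, sin_sq, ← sub_eq_add_neg, h₁, h₂]
  ring

lemma sum_sqR_cos_sub_one_sq_add_sin_sq (k : Fin 2 → ℝ) :
    ∑ ρ : ↥sqR, (cos (ipk ρ.1 k) - 1) ^ 2 + ∑ ρ : ↥sqR, sin (ipk ρ.1 k) ^ 2 =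
      4 * ((1 - cos (k 0)) + (1 - cos (k 1)) + (1 - cos (k 0 + k 1)) +
        (1 - cos (k 0 - k 1))) := by
  have h₁ : cos (-k 0 - k 1) = cos (k 0 + k 1) := by rw [← cos_neg]; ring_nf
  have h₂ : cos (-k 0 + k 1) = cos (k 0 - k 1) := by rw [← cos_neg]; ring_nf
  rw [sum_sqR, sum_sqR]
  simp [sin_sq, ← sub_eq_add_neg, h₁, h₂]
  ring

lemma bondForm_LH_lower {c₁ c₂ d₁ d₂ : ℝ} (hc : c₁ + 2 * c₂ = 0) (hd₁ : 0 ≤ d₁) (hd₂ : 0 ≤ d₂)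
    (X Y P Q : ℝ) :
    min (d₁ / 6) (2 * d₂ / 3) * ((X ^ 2 + Y ^ 2) * (6 * (P ^ 2 + Q ^ 2))) ≤
      bondForm c₁ c₂ d₁ d₂ X Y (2 * P ^ 2) (2 * Q ^ 2) (2 * (P + Q) ^ 2) (2 * (P - Q) ^ 2) := by
  obtain rfl : c₁ = -2 * c₂ := by linarith
  unfold bondForm
  rcases le_total d₁ (4 * d₂) with h | h
  · rw [min_eq_left (by linarith)]
    nlinarith [mul_nonneg (by linarith : 0 ≤ d₁ + 4 * d₂) (sq_nonneg (P * X + Q * Y)),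
      mul_nonneg (by linarith : 0 ≤ 4 * d₂ - d₁) (sq_nonneg (P * Y + Q * X))]
  · rw [min_eq_right (by linarith)]
    nlinarith [mul_nonneg (by linarith : 0 ≤ d₁ + 4 * d₂) (sq_nonneg (P * X + Q * Y)),
      mul_nonneg (by linarith : 0 ≤ d₁ - 4 * d₂) (sq_nonneg (P * X - Q * Y))]

lemma abs_le_one_sub_mul_of_sq_eq {x y T : ℝ} (hx₀ : -1 ≤ x) (hx₁ : x ≤ 1) (hy₀ : -1 ≤ y)
    (hy₁ : y ≤ 1) (hT : T ^ 2 = (1 - x ^ 2) * (1 - y ^ 2)) : |T| ≤ 1 - x * y := by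
  refine abs_le_of_sq_le_sq ?_ ?_
  · nlinarith [sq_nonneg (x - y)]
  · nlinarith [mul_nonneg (by linarith : 0 ≤ 1 - x) (by linarith : 0 ≤ 1 + y),
      mul_nonneg (by linarith : 0 ≤ 1 + x) (by linarith : 0 ≤ 1 - y)]

/-- Used with `x = cos k₁`, `y = cos k₂`, `T = sin k₁ sin k₂`. The difference of the two sides
is a quadratic form `M₁X² + 4d₂TXY + M₂Y²` with `M₁, M₂ ≥ 0` and `(2d₂T)² ≤ M₁M₂`. -/
lemma bondForm_atom_lower {c₁ c₂ d₁ d₂ ε : ℝ} (hc : c₁ + 2 * c₂ = 0) (hε : 0 ≤ ε)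
    (hε₀ : ε ≤ c₁ + d₁ / 2) (hε₁ : ε ≤ d₁ / 6) (hε₂ : ε ≤ 2 * d₂ / 3)
    {x y T : ℝ} (hx₀ : -1 ≤ x) (hx₁ : x ≤ 1) (hy₀ : -1 ≤ y) (hy₁ : y ≤ 1)
    (hT : T ^ 2 = (1 - x ^ 2) * (1 - y ^ 2)) (X Y : ℝ) :
    ε * ((X ^ 2 + Y ^ 2) * ((1 - x) + (1 - y) + (1 - (x * y - T)) + (1 - (x * y + T)))) ≤
      bondForm c₁ c₂ d₁ d₂ X Y (1 - x) (1 - y) (1 - (x * y - T)) (1 - (x * y + T)) := by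
  obtain rfl : c₁ = -2 * c₂ := by linarith
  have hd₁ : 0 ≤ d₁ := by linarith
  have hd₂ : 0 ≤ d₂ := by linarith
  have hTC := abs_le_one_sub_mul_of_sq_eq hx₀ hx₁ hy₀ hy₁ hT
  have hC : 0 ≤ 1 - x * y := (abs_nonneg T).trans hTC
  obtain ⟨p, hp_def⟩ : ∃ p, p =
      (-2 * c₂ + d₁ / 2 - ε) * ((1 - x) * (1 - y)) + (2 * d₂ - 3 * ε) * (1 - x * y) :=
    ⟨_, rfl⟩
  have hp₁ : 0 ≤ (-2 * c₂ + d₁ / 2 - ε) * ((1 - x) * (1 - y)) :=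
    mul_nonneg (by linarith) (mul_nonneg (by linarith) (by linarith))
  have hp₀ : 0 ≤ p := by nlinarith [mul_nonneg (by linarith : 0 ≤ 2 * d₂ - 3 * ε) hC]
  have hpT : 2 * d₂ * |T| ≤ p + d₁ / 2 * |T| := by
    rcases le_total (d₁ / 2) (2 * d₂) with h | h
    · nlinarith [mul_le_mul_of_nonneg_left hTC (by linarith : 0 ≤ 2 * d₂ - d₁ / 2),
        mul_nonneg (by linarith : 0 ≤ d₁ / 2 - 3 * ε) hC]
    · nlinarith [mul_nonneg (by linarith : 0 ≤ d₁ / 2 - 2 * d₂) (abs_nonneg T)]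
  have hdisc : (2 * d₂ * T) ^ 2 ≤
      (p + d₁ / 2 * ((1 - x) * (1 + y))) * (p + d₁ / 2 * ((1 + x) * (1 - y))) :=
    calc (2 * d₂ * T) ^ 2 = (2 * d₂ * |T|) ^ 2 := by rw [mul_pow, mul_pow _ |T|, sq_abs]
      _ ≤ (p + d₁ / 2 * |T|) ^ 2 := pow_le_pow_left₀ (by positivity) hpT 2
      _ = p ^ 2 + d₁ * p * |T| + d₁ ^ 2 / 4 * T ^ 2 := by
        linear_combination (d₁ ^ 2 / 4) * sq_abs T
      _ ≤ p ^ 2 + d₁ * p * (1 - x * y) + d₁ ^ 2 / 4 * T ^ 2 := by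
        nlinarith [mul_le_mul_of_nonneg_left hTC (mul_nonneg hd₁ hp₀)]
      _ = (p + d₁ / 2 * ((1 - x) * (1 + y))) * (p + d₁ / 2 * ((1 + x) * (1 - y))) := by
        rw [hT]; ring
  have key := quadratic_nonneg_of_sq_le
    (add_nonneg hp₀ (mul_nonneg (by linarith) (mul_nonneg (by linarith) (by linarith))))
    (add_nonneg hp₀ (mul_nonneg (by linarith) (mul_nonneg (by linarith) (by linarith)))) hdisc X Y
  rw [hp_def] at key
  unfold bondForm
  linear_combination key

lemma sum_one_sub_cos_pos {k : Fin 2 → ℝ} (hk : k ≠ 0) (hk' : ∀ i, k i ∈ Set.Ico 0 (2 * π)) :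
    0 < (1 - cos (k 0)) + (1 - cos (k 1)) + (1 - cos (k 0 + k 1)) + (1 - cos (k 0 - k 1)) := by
  obtain ⟨i, hi⟩ := Function.ne_iff.mp hk
  have hcos : cos (k i) < 1 := by
    refine (cos_le_one _).lt_of_ne fun h => hi ?_
    exact (cos_eq_one_iff_of_lt_of_lt (by linarith [(hk' i).1, pi_pos]) (hk' i).2).1 h
  have := cos_le_one (k 0); have := cos_le_one (k 1)
  have := cos_le_one (k 0 + k 1); have := cos_le_one (k 0 - k 1)
  fin_cases i <;> simp at hcos <;> linarith

theorem lamTildeLH_bondK {c₁ c₂ d₁ d₂ : ℝ} (hc : c₁ + 2 * c₂ = 0) (hd₁ : 0 ≤ d₁)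
    (hd₂ : 0 ≤ d₂) : lamTildeLH (bondK c₁ c₂ d₁ d₂) = min (d₁ / 6) (2 * d₂ / 3) := by
  refine IsLeast.csInf_eq ⟨?_, ?_⟩
  · rcases min_choice (d₁ / 6) (2 * d₂ / 3) with h | h <;> rw [h]
    · refine ⟨![1, -1], ![1, 1], by simp, by simp, ?_⟩
      rw [Qform_bondK_ipk, sum_sqR_ipk_sq]
      simp [bondForm]
      linear_combination (-1 / 3 : ℝ) * hc
    · refine ⟨![0, 1], ![1, 0], by simp, by simp, ?_⟩
      rw [Qform_bondK_ipk, sum_sqR_ipk_sq]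
      simp [bondForm]
      linear_combination (-1 / 3 : ℝ) * hc
  · rintro b ⟨ξ, η, hξ, hη, rfl⟩
    have hξ₀ := sum_sq_pos_of_ne_zero hξ
    have hη₀ := sum_sq_pos_of_ne_zero hη
    rw [Fin.sum_univ_two] at hξ₀ hη₀
    rw [Qform_bondK_ipk, sum_sqR_ipk_sq, Fin.sum_univ_two, le_div_iff₀ (by positivity)]
    exact bondForm_LH_lower hc hd₁ hd₂ _ _ _ _

theorem lamAtomCS_bondK_pos_iff {c₁ c₂ d₁ d₂ : ℝ} (hc : c₁ + 2 * c₂ = 0) (hd₁ : 0 < d₁)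
    (hd₂ : 0 < d₂) : 0 < lamAtomCS (bondK c₁ c₂ d₁ d₂) ↔ 0 < c₁ + d₁ / 2 := by
  refine sInf_pos_iff_of_mem ⟨![1, 0], ![π, π], by simp, by simp [pi_ne_zero], ?_, ?_⟩ ?_
  · intro i
    fin_cases i <;> simpa using ⟨pi_pos.le, by linarith [pi_pos]⟩
  · rw [Qform_bondK_cos_add_sin, sum_sqR_cos_sub_one_sq_add_sin_sq]
    simp [bondForm]
    ring
  · intro h
    refine ⟨min (c₁ + d₁ / 2) (min (d₁ / 6) (2 * d₂ / 3)), by positivity, ?_⟩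
    rintro b ⟨ξ, k, hξ, hk, hk', rfl⟩
    have hξ₀ := sum_sq_pos_of_ne_zero hξ
    have hk₀ := sum_one_sub_cos_pos hk hk'
    rw [Fin.sum_univ_two] at hξ₀
    rw [Qform_bondK_cos_add_sin, sum_sqR_cos_sub_one_sq_add_sin_sq, Fin.sum_univ_two,
      le_div_iff₀ (by positivity), cos_add, cos_sub]
    have := bondForm_atom_lower (d₂ := d₂) hc (by positivity) (min_le_left _ _)
      ((min_le_right _ _).trans (min_le_left _ _)) ((min_le_right _ _).trans (min_le_right _ _))
      (neg_one_le_cos (k 0)) (cos_le_one (k 0)) (neg_one_le_cos (k 1)) (cos_le_one (k 1))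
      (T := sin (k 0) * sin (k 1)) (by rw [mul_pow, sin_sq, sin_sq]) (ξ 0) (ξ 1)
    linear_combination 4 * this

/-- for the square mass-spring lattice at the equilibrium
dilation `r* = (K₁a₁ + √2 K₂a₂)/(K₁+2K₂)`, with `α = a₂/(√2 a₁)`,
`κ = K₂/K₁`, `β = (1+2κ)/(1+2ακ)`: the continuum constant
`λ̃_LH(r* Id) = (K₁/12)β min{1, 2ακ} > 0` always, while `λ_atom(r* Id) > 0`
iff `β < 2`, equivalently iff `α ≥ 1/2`, or `α < 1/2` and
`κ < 1/(2(1−2α))`. -/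
theorem square_lattice_stability
    (K₁ K₂ a₁ a₂ : ℝ) (hK₁ : 0 < K₁) (hK₂ : 0 < K₂) (ha₁ : 0 < a₁)
    (ha₂ : 0 < a₂) :
    lamTildeLH (sqK K₁ K₂ a₁ a₂
        ((K₁ * a₁ + Real.sqrt 2 * K₂ * a₂) / (K₁ + 2 * K₂))) =
      K₁ / 12 * ((1 + 2 * (K₂ / K₁)) / (1 + 2 * (a₂ / (Real.sqrt 2 * a₁)) * (K₂ / K₁))) *
        min 1 (2 * (a₂ / (Real.sqrt 2 * a₁)) * (K₂ / K₁)) ∧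
    0 < lamTildeLH (sqK K₁ K₂ a₁ a₂
        ((K₁ * a₁ + Real.sqrt 2 * K₂ * a₂) / (K₁ + 2 * K₂))) ∧
    (0 < lamAtomCS (sqK K₁ K₂ a₁ a₂
        ((K₁ * a₁ + Real.sqrt 2 * K₂ * a₂) / (K₁ + 2 * K₂))) ↔
      (1 + 2 * (K₂ / K₁)) / (1 + 2 * (a₂ / (Real.sqrt 2 * a₁)) * (K₂ / K₁)) < 2) ∧
    ((1 + 2 * (K₂ / K₁)) / (1 + 2 * (a₂ / (Real.sqrt 2 * a₁)) * (K₂ / K₁)) < 2 ↔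
      (1 / 2 ≤ a₂ / (Real.sqrt 2 * a₁) ∨
        (a₂ / (Real.sqrt 2 * a₁) < 1 / 2 ∧
          K₂ / K₁ < 1 / (2 * (1 - 2 * (a₂ / (Real.sqrt 2 * a₁))))))) := by
  obtain ⟨r, hr⟩ : ∃ r, (K₁ * a₁ + √2 * K₂ * a₂) / (K₁ + 2 * K₂) = r := ⟨_, rfl⟩
  rw [hr]
  have hr₀ : 0 < r := hr ▸ by positivity
  have hβ : (1 + 2 * (K₂ / K₁)) / (1 + 2 * (a₂ / (√2 * a₁)) * (K₂ / K₁)) = a₁ / r := by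
    rw [← hr]
    field_simp
    ring_nf
    rw [sq_sqrt zero_le_two]
    ring
  have hc : K₁ / 2 * (1 - a₁ / r) + 2 * (K₂ / 2 * (1 - a₂ / (√2 * r))) = 0 := by
    rw [← hr]
    field_simp
    ring_nf
    rw [sq_sqrt zero_le_two]
    ring
  rw [sqK_eq_bondK, lamTildeLH_bondK hc (by positivity) (by positivity),
    lamAtomCS_bondK_pos_iff hc (by positivity) (by positivity)]
  refine ⟨?_, by positivity, ?_, one_add_two_mul_div_lt_two_iff (by positivity) (by positivity)⟩
  · rw [hβ, mul_min_of_nonneg _ _ (by positivity), mul_one]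
    congr 1 <;> field_simp <;> ring
  · rw [hβ, show K₁ / 2 * (1 - a₁ / r) + K₁ * a₁ / (2 * r) / 2 = K₁ / 4 * (2 - a₁ / r) by ring,
      mul_pos_iff_of_pos_left (by positivity), sub_pos]

end
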